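/- On the k-algebra A = ⊕_{i∈ℕ} k z_i with product z_m z_n = Σ_{j=0}^{m} C(m+n-j, n) C(n, j) λ^j z_{m+n-j}, the operator d defined by d(z_0) = 0 and d(z_n) = z_{n-1} for n ≥ 1 is a differential operator of weight λ: d(uv) = d(u)v + u d(v) + λ d(u)d(v) for all u, v ∈ A, and d(z_0) = 0. -/

import Mathlib

/-!
On basis elements both sides of the Leibniz rule for `z_{M+1} z_{N+1}` are sums over `j ≤ M + 1`
of multiples of `λ^j z_{M+N+1-j}`; after shifting the index of the `λ z_M z_N` term, the
coefficients agree by two applications of Pascal's rule. Everything else is bilinearity and the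
fact that `z_0` is the identity.
-/

open Finset

/-- The multiplication on A = ⊕ K z_i determined by
z_m z_n = Σ_{j=0}^{m} C(m+n-j, n) C(n, j) λ^j z_{m+n-j}, extended bilinearly. -/
noncomputable def zmul {K : Type*} [CommRing K] (lam : K) (u v : ℕ →₀ K) : ℕ →₀ K :=
  u.sum fun m a => v.sum fun n b =>
    ∑ j ∈ range (m + 1),
      ((m + n - j).choose n * n.choose j) • Finsupp.single (m + n - j) (a * b * lam ^ j)

/-- The operator d with d(z_0) = 0 and d(z_n) = z_{n-1} for n ≥ 1, extended linearly. -/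
noncomputable def dOp {K : Type*} [CommRing K] (u : ℕ →₀ K) : ℕ →₀ K :=
  u.sum fun i a => if i = 0 then 0 else Finsupp.single (i - 1) a

theorem Nat.choose_succ_mul_choose_succ_eq (s N j : ℕ) :
    (s + 1).choose (N + 1) * (N + 1).choose j
      = s.choose (N + 1) * (N + 1).choose j + s.choose N * N.choose j
        + s.choose N * ((N + 1).choose j - N.choose j) := by
  have hle : N.choose j ≤ (N + 1).choose j := Nat.choose_le_succ N j
  rw [Nat.choose_succ_succ, add_assoc, ← mul_add, Nat.add_sub_cancel' hle]
  ring

theorem Nat.choose_succ_succ_sub_choose_succ (N j : ℕ) :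
    (N + 1).choose (j + 1) - N.choose (j + 1) = N.choose j := by
  rw [Nat.choose_succ_succ', Nat.add_sub_cancel]

theorem Nat.choose_add_sub_mul_choose_eq_zero {m n j : ℕ} (h : m < j) :
    (m + n - j).choose n * n.choose j = 0 := by
  rcases lt_or_ge n j with hnj | hjn
  · rw [Nat.choose_eq_zero_of_lt hnj, mul_zero]
  · rw [Nat.choose_eq_zero_of_lt (by omega), zero_mul]

section

variable {K : Type*} [CommRing K] (lam : K)

@[simp]
theorem dOp_single_zero (a : K) : dOp (Finsupp.single 0 a) = 0 := by
  simp [dOp]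

@[simp]
theorem dOp_single_succ (i : ℕ) (a : K) : dOp (Finsupp.single (i + 1) a) = Finsupp.single i a := by
  simp [dOp]

@[simp]
theorem dOp_zero : dOp (0 : ℕ →₀ K) = 0 := by
  simp [dOp]

theorem dOp_add (u v : ℕ →₀ K) : dOp (u + v) = dOp u + dOp v := by
  unfold dOp
  rw [Finsupp.sum_add_index'] <;> intros <;> split_ifs <;> simp

theorem dOp_smul (c : K) (u : ℕ →₀ K) : dOp (c • u) = c • dOp u := by
  unfold dOp
  rw [Finsupp.sum_smul_index, Finsupp.smul_sum]
  · refine Finsupp.sum_congr fun i _ => ?_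
    split_ifs <;> simp
  · intro i; split_ifs <;> simp

variable (K) in
noncomputable def dOpₗ : (ℕ →₀ K) →ₗ[K] (ℕ →₀ K) where
  toFun := dOp
  map_add' := dOp_add
  map_smul' := dOp_smul

@[simp]
theorem dOpₗ_apply (u : ℕ →₀ K) : dOpₗ K u = dOp u := rfl

@[simp]
theorem zmul_zero_left (v : ℕ →₀ K) : zmul lam 0 v = 0 := by
  simp [zmul]

@[simp]
theorem zmul_zero_right (u : ℕ →₀ K) : zmul lam u 0 = 0 := by
  simp [zmul]

theorem zmul_add_left (u₁ u₂ v : ℕ →₀ K) :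
    zmul lam (u₁ + u₂) v = zmul lam u₁ v + zmul lam u₂ v := by
  unfold zmul
  rw [Finsupp.sum_add_index' (by simp)]
  intro m a₁ a₂
  rw [← Finsupp.sum_add]
  refine Finsupp.sum_congr fun n _ => ?_
  rw [← sum_add_distrib]
  refine sum_congr rfl fun j _ => ?_
  rw [← smul_add, ← Finsupp.single_add, add_mul, add_mul]

theorem zmul_add_right (u v₁ v₂ : ℕ →₀ K) :
    zmul lam u (v₁ + v₂) = zmul lam u v₁ + zmul lam u v₂ := by
  unfold zmul
  rw [← Finsupp.sum_add]
  refine Finsupp.sum_congr fun m _ => ?_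
  rw [Finsupp.sum_add_index' (by simp)]
  intro n b₁ b₂
  rw [← sum_add_distrib]
  refine sum_congr rfl fun j _ => ?_
  rw [← smul_add, ← Finsupp.single_add, mul_add, add_mul]

theorem zmul_single_single (m n : ℕ) (a b : K) :
    zmul lam (Finsupp.single m a) (Finsupp.single n b)
      = ∑ j ∈ range (m + 1),
          ((m + n - j).choose n * n.choose j) • Finsupp.single (m + n - j) (a * b * lam ^ j) := by
  simp [zmul]

-- The terms with `j > m` vanish.
theorem zmul_single_single_eq_sum_range {m n r k : ℕ} (hr : m < r) (hk : m + n = k) (a b : K) :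
    zmul lam (Finsupp.single m a) (Finsupp.single n b)
      = ∑ j ∈ range r,
          ((k - j).choose n * n.choose j) • Finsupp.single (k - j) (a * b * lam ^ j) := by
  subst hk
  rw [zmul_single_single]
  refine sum_subset (range_subset_range.2 hr) fun j _ hj => ?_
  rw [Nat.choose_add_sub_mul_choose_eq_zero (by simpa using hj), zero_smul]

theorem zmul_single_zero_left (a : K) (v : ℕ →₀ K) : zmul lam (Finsupp.single 0 a) v = a • v := by
  conv_rhs => rw [← v.sum_single, Finsupp.smul_sum]
  refine (Finsupp.sum_single_index (by simp)).trans (Finsupp.sum_congr fun n _ => ?_)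
  simp only [zero_add, Nat.choose_self, Nat.choose_zero_right, sum_range_one, Nat.sub_zero,
    pow_zero, mul_one, one_smul, Finsupp.smul_single, smul_eq_mul]

theorem zmul_single_zero_right (u : ℕ →₀ K) (b : K) : zmul lam u (Finsupp.single 0 b) = b • u := by
  conv_rhs => rw [← u.sum_single, Finsupp.smul_sum]
  refine Finsupp.sum_congr fun m _ => ?_
  rw [Finsupp.sum_single_index (by simp), sum_range_succ', sum_eq_zero (by simp)]
  simp [mul_comm]

theorem dOp_zmul_single_succ_single_succ (M N : ℕ) (a b : K) :
    dOp (zmul lam (Finsupp.single (M + 1) a) (Finsupp.single (N + 1) b))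
      = ∑ j ∈ range (M + 2), ((M + N + 1 - j + 1).choose (N + 1) * (N + 1).choose j) •
          Finsupp.single (M + N + 1 - j) (a * b * lam ^ j) := by
  rw [zmul_single_single_eq_sum_range lam (r := M + 2) (k := M + N + 2) (by omega) (by omega),
    ← dOpₗ_apply, map_sum]
  refine sum_congr rfl fun j hj => ?_
  obtain ⟨i, hi⟩ : ∃ i, M + N + 2 - j = i + 1 := ⟨M + N + 1 - j, by simp at hj; omega⟩
  have hi' : i = M + N + 1 - j := by omega
  rw [map_nsmul, hi, dOpₗ_apply, dOp_single_succ, hi']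

-- The coefficient `C(N+1, j) - C(N, j)` is `C(N, j-1)` for `j ≥ 1` and vanishes at `j = 0`.
theorem smul_zmul_single_single_eq_sum (M N : ℕ) (a b : K) :
    lam • zmul lam (Finsupp.single M a) (Finsupp.single N b)
      = ∑ j ∈ range (M + 2), ((M + N + 1 - j).choose N * ((N + 1).choose j - N.choose j)) •
          Finsupp.single (M + N + 1 - j) (a * b * lam ^ j) := by
  rw [zmul_single_single, sum_range_succ' _ (M + 1), smul_sum]
  simp only [Nat.choose_zero_right, Nat.sub_self, mul_zero, zero_smul, add_zero,
    Nat.add_sub_add_right, Nat.choose_succ_succ_sub_choose_succ]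
  refine sum_congr rfl fun j _ => ?_
  rw [smul_comm, Finsupp.smul_single, smul_eq_mul, pow_succ]
  ring_nf

theorem dOp_zmul_single_succ_single_succ_eq (M N : ℕ) (a b : K) :
    dOp (zmul lam (Finsupp.single (M + 1) a) (Finsupp.single (N + 1) b))
      = zmul lam (Finsupp.single M a) (Finsupp.single (N + 1) b)
        + zmul lam (Finsupp.single (M + 1) a) (Finsupp.single N b)
        + lam • zmul lam (Finsupp.single M a) (Finsupp.single N b) := by
  rw [dOp_zmul_single_succ_single_succ, smul_zmul_single_single_eq_sum,
    zmul_single_single_eq_sum_range lam (r := M + 2) (k := M + N + 1) (by omega) (by omega),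
    zmul_single_single_eq_sum_range lam (r := M + 2) (k := M + N + 1) (by omega) (by omega),
    ← sum_add_distrib, ← sum_add_distrib]
  refine sum_congr rfl fun j _ => ?_
  rw [← add_smul, ← add_smul, Nat.choose_succ_mul_choose_succ_eq]

theorem dOp_zmul_single_zero_left (a : K) (v : ℕ →₀ K) :
    dOp (zmul lam (Finsupp.single 0 a) v)
      = zmul lam (dOp (Finsupp.single 0 a)) v + zmul lam (Finsupp.single 0 a) (dOp v)
        + lam • zmul lam (dOp (Finsupp.single 0 a)) (dOp v) := by
  simp [zmul_single_zero_left, dOp_smul]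

theorem dOp_zmul_single_zero_right (u : ℕ →₀ K) (b : K) :
    dOp (zmul lam u (Finsupp.single 0 b))
      = zmul lam (dOp u) (Finsupp.single 0 b) + zmul lam u (dOp (Finsupp.single 0 b))
        + lam • zmul lam (dOp u) (dOp (Finsupp.single 0 b)) := by
  simp [zmul_single_zero_right, dOp_smul]

theorem dOp_zmul_single_single (m n : ℕ) (a b : K) :
    dOp (zmul lam (Finsupp.single m a) (Finsupp.single n b))
      = zmul lam (dOp (Finsupp.single m a)) (Finsupp.single n b)
        + zmul lam (Finsupp.single m a) (dOp (Finsupp.single n b))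
        + lam • zmul lam (dOp (Finsupp.single m a)) (dOp (Finsupp.single n b)) := by
  rcases m with _ | M
  · exact dOp_zmul_single_zero_left lam a _
  rcases n with _ | N
  · exact dOp_zmul_single_zero_right lam _ b
  simpa using dOp_zmul_single_succ_single_succ_eq lam M N a b

theorem dOp_zmul (u v : ℕ →₀ K) :
    dOp (zmul lam u v)
      = zmul lam (dOp u) v + zmul lam u (dOp v) + lam • zmul lam (dOp u) (dOp v) := by
  induction u using Finsupp.induction_linear with
  | zero => simp
  | add u₁ u₂ hu₁ hu₂ =>
    simp only [zmul_add_left, dOp_add, hu₁, hu₂]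
    module
  | single m a =>
    induction v using Finsupp.induction_linear with
    | zero => simp
    | add v₁ v₂ hv₁ hv₂ =>
      simp only [zmul_add_right, dOp_add, hv₁, hv₂]
      module
    | single n b => exact dOp_zmul_single_single lam m n a b

end

/-- d is a differential operator of weight λ on A: it is K-linear, satisfies the
λ-Leibniz rule, and d(z_0) = 0 (z_0 being the identity of A). -/
theorem stmt7 {K : Type*} [CommRing K] (lam : K) :
    (∀ u v : ℕ →₀ K, dOp (u + v) = dOp u + dOp v) ∧
    (∀ (c : K) (u : ℕ →₀ K), dOp (c • u) = c • dOp u) ∧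
    (dOp (Finsupp.single 0 (1 : K)) = 0) ∧
    (∀ n : ℕ, 1 ≤ n → dOp (Finsupp.single n (1 : K)) = Finsupp.single (n - 1) (1 : K)) ∧
    (∀ u v : ℕ →₀ K,
      dOp (zmul lam u v)
        = zmul lam (dOp u) v + zmul lam u (dOp v) + lam • zmul lam (dOp u) (dOp v)) := by
  refine ⟨dOp_add, dOp_smul, dOp_single_zero 1, fun n hn => ?_, dOp_zmul lam⟩
  obtain ⟨i, rfl⟩ := Nat.exists_eq_add_of_le' hn
  exact dOp_single_succ i 1
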